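/- Fix (ϑ1,ϑ2,ϑ3,ϑ4) ∈ ℝ⁴ with ϑ1+ϑ2 = 1 and ϑ3+ϑ4 = −1, and for bounded measurable candidates τ̃, μ̃0, μ̃1 on 𝒳 and measurable ẽ with 0 < ẽ(X) < 1 a.s., write the GNPW residual Ψ[τ̃, ẽ, (μ̃0,μ̃1)] = (ϑ1·W + ϑ2·ẽ(X) + ϑ3·W·ẽ(X) + ϑ4·ẽ(X)²)·τ̃(X) − (W−ẽ(X))·[Y − μ̃0(X) − (ϑ2+ϑ4·ẽ(X))(μ̃1(X)−μ̃0(X))]. Then, almost surely: E[Ψ[τ̃, e, (μ̃0,μ̃1)] | σ(X)] = e(X)(1−e(X))·(τ̃(X)−τ(X)) and E[Ψ[τ̃, ẽ, (μ0,μ1)] | σ(X)] = (ϑ1·e(X) + ϑ2·ẽ(X) + ϑ3·e(X)ẽ(X) + ϑ4·ẽ(X)²)·(τ̃(X)−τ(X)); in particular both conditional expectations vanish a.s. if and only if τ̃(X) = τ(X) a.s. (basic double robustness). -/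

import Mathlib

/-!
Since `W ∈ {0, 1}`, SUTVA gives `(W - ẽ) Y = (1 - ẽ) W Y1 - ẽ (1 - W) Y0`, and unconfoundedness
factorises `E[W Y1 | X] = e μ1` and `E[(1 - W) Y0 | X] = (1 - e) μ0`: almost surely the two factors
are independent under the regular conditional distribution given `X`. So `Ψ` is linear in `W`,
`W Y1`, `(1 - W) Y0` with bounded `σ(X)`-measurable coefficients, and `E[Ψ | X]` is an explicit
polynomial in `e, ẽ, τ̃, μ0, μ1, μ̃0, μ̃1`. The constraints `ϑ1 + ϑ2 = 1`, `ϑ3 + ϑ4 = -1` collapse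
it to the two stated forms, and `e (1 - e) > 0` gives the equivalence.
-/

open MeasureTheory ProbabilityTheory Filter Set
open scoped ENNReal

/-- The sub-σ-algebra σ(X) generated by a random element `X`. -/
abbrev sigmaAlg {Ω 𝒳 : Type*} [m𝒳 : MeasurableSpace 𝒳] (X : Ω → 𝒳) : MeasurableSpace Ω :=
  MeasurableSpace.comap X m𝒳

section General

variable {Ω : Type*} {m mΩ : MeasurableSpace Ω} {μ : Measure Ω}

namespace ProbabilityTheory.CondIndepFun

theorem ae_indepFun_condExpKernel [StandardBorelSpace Ω] [IsFiniteMeasure μ]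
    {β β' : Type*} {mβ : MeasurableSpace β} {mβ' : MeasurableSpace β'}
    [MeasurableSpace.CountableOrCountablyGenerated Ω (β × β')] {hm : m ≤ mΩ}
    {f : Ω → β} {g : Ω → β'} (hf : Measurable f) (hg : Measurable g)
    (h : CondIndepFun m hm f g μ) :
    ∀ᵐ ω ∂μ, f ⟂ᵢ[condExpKernel μ m ω] g := by
  filter_upwards [ae_of_ae_trim hm ((condIndepFun_iff_map_prod_eq_prod_map_map hf hg).1 h)]
    with ω hω
  rw [indepFun_iff_map_prod_eq_prod_map_map hf.aemeasurable hg.aemeasurable]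
  simpa [Kernel.map_apply _ (hf.prodMk hg), Kernel.map_apply _ hf, Kernel.map_apply _ hg,
    Kernel.prod_apply] using hω

theorem condExp_mul_ae_eq [StandardBorelSpace Ω] [IsFiniteMeasure μ] {hm : m ≤ mΩ}
    {f g : Ω → ℝ} (hf : Measurable f) (hg : Measurable g) (hfi : Integrable f μ)
    (hgi : Integrable g μ) (hfgi : Integrable (f * g) μ) (h : CondIndepFun m hm f g μ) :
    μ[f * g|m] =ᵐ[μ] μ[f|m] * μ[g|m] := by
  filter_upwards [h.ae_indepFun_condExpKernel hf hg,
    condExp_ae_eq_integral_condExpKernel hm hfgi, condExp_ae_eq_integral_condExpKernel hm hfi,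
    condExp_ae_eq_integral_condExpKernel hm hgi] with ω hind hfg hf' hg'
  rw [Pi.mul_apply, hfg, hf', hg']
  exact hind.integral_mul_eq_mul_integral hf.aestronglyMeasurable hg.aestronglyMeasurable

end ProbabilityTheory.CondIndepFun

/-- Integrability is part of the relation (`μ[Z|m] = 0` for non-integrable `Z`), which makes it
stable under sums and under multiplication by bounded `m`-measurable factors. -/
def HasCondExp (m : MeasurableSpace Ω) {mΩ : MeasurableSpace Ω} (μ : Measure Ω) (Z z : Ω → ℝ) :
    Prop :=
  Integrable Z μ ∧ μ[Z|m] =ᵐ[μ] z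

namespace HasCondExp

variable {Z Z' z z' a : Ω → ℝ}

theorem of_measurable [IsFiniteMeasure μ] (hm : m ≤ mΩ) (ha : Measurable[m] a)
    (ha' : Integrable a μ) : HasCondExp m μ a a :=
  ⟨ha', (condExp_of_stronglyMeasurable hm ha.stronglyMeasurable ha').eventuallyEq⟩

theorem add (h : HasCondExp m μ Z z) (h' : HasCondExp m μ Z' z') :
    HasCondExp m μ (Z + Z') (z + z') :=
  ⟨h.1.add h'.1, (condExp_add h.1 h'.1 m).trans (h.2.add h'.2)⟩

theorem sub (h : HasCondExp m μ Z z) (h' : HasCondExp m μ Z' z') :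
    HasCondExp m μ (Z - Z') (z - z') :=
  ⟨h.1.sub h'.1, (condExp_sub h.1 h'.1 m).trans (h.2.sub h'.2)⟩

theorem mul_left (h : HasCondExp m μ Z z) (ha : Measurable[m] a) (ha' : MemLp a ∞ μ) :
    HasCondExp m μ (a * Z) (a * z) :=
  ⟨h.1.mul_of_top_right ha', (condExp_mul_of_stronglyMeasurable_left ha.stronglyMeasurable
    (h.1.mul_of_top_right ha') h.1).trans (EventuallyEq.rfl.mul h.2)⟩

theorem mul_of_condIndepFun [StandardBorelSpace Ω] [IsFiniteMeasure μ] {hm : m ≤ mΩ}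
    (h : HasCondExp m μ Z z) (h' : HasCondExp m μ Z' z') (hZ : Measurable Z)
    (hZ' : Measurable Z') (hZZ' : Integrable (Z * Z') μ) (hind : CondIndepFun m hm Z Z' μ) :
    HasCondExp m μ (Z * Z') (z * z') :=
  ⟨hZZ', (hind.condExp_mul_ae_eq hZ hZ' h.1 h'.1 hZZ').trans (h.2.mul h'.2)⟩

end HasCondExp

theorem hasCondExp_treatment_outcomes [StandardBorelSpace Ω] [IsFiniteMeasure μ] (hm : m ≤ mΩ)
    {W Y0 Y1 e μ0 μ1 : Ω → ℝ} (hWm : Measurable W) (hWbin : ∀ ω, W ω = 0 ∨ W ω = 1)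
    (hY0m : Measurable Y0) (hY1m : Measurable Y1) (hY0 : MemLp Y0 ∞ μ) (hY1 : MemLp Y1 ∞ μ)
    (hUnconf : CondIndepFun m hm W (fun ω => (Y0 ω, Y1 ω)) μ) (hprop : μ[W|m] =ᵐ[μ] e)
    (hμ0 : μ[Y0|m] =ᵐ[μ] μ0) (hμ1 : μ[Y1|m] =ᵐ[μ] μ1) :
    HasCondExp m μ W e ∧ HasCondExp m μ (W * Y1) (e * μ1) ∧
      HasCondExp m μ ((1 - W) * Y0) ((1 - e) * μ0) := by
  have hW' : MemLp W ∞ μ := memLp_top_of_bound hWm.aestronglyMeasurable 1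
    (.of_forall fun ω => by rcases hWbin ω with h | h <;> simp [h])
  have hW : HasCondExp m μ W e := ⟨hW'.integrable le_top, hprop⟩
  refine ⟨hW, ?_, ?_⟩
  · exact hW.mul_of_condIndepFun ⟨hY1.integrable le_top, hμ1⟩ hWm hY1m
      ((hY1.mul hW').integrable le_top) (hUnconf.comp measurable_id measurable_snd)
  · have h1W : HasCondExp m μ (1 - W) (1 - e) :=
      (HasCondExp.of_measurable hm measurable_const (integrable_const 1)).sub hW
    exact h1W.mul_of_condIndepFun ⟨hY0.integrable le_top, hμ0⟩ (measurable_const.sub hWm) hY0m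
      ((hY0.mul ((memLp_const 1).sub hW')).integrable le_top)
      (hUnconf.comp (measurable_const.sub measurable_id) measurable_fst)

/-- `Ψ[τ, ε, (β0, β1)]`, with every function of `X` already composed with `X`. -/
def gnpwResidual (θ1 θ2 θ3 θ4 : ℝ) (W Y τ ε β0 β1 : Ω → ℝ) : Ω → ℝ := fun ω =>
  (θ1 * W ω + θ2 * ε ω + θ3 * W ω * ε ω + θ4 * ε ω ^ 2) * τ ω
    - (W ω - ε ω) * (Y ω - β0 ω - (θ2 + θ4 * ε ω) * (β1 ω - β0 ω))

theorem condExp_gnpwResidual [IsFiniteMeasure μ] (hm : m ≤ mΩ) (θ1 θ2 θ3 θ4 : ℝ)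
    {W Y Y0 Y1 e μ0 μ1 τ ε β0 β1 : Ω → ℝ}
    (hWbin : ∀ ω, W ω = 0 ∨ W ω = 1) (hY : ∀ ω, Y ω = W ω * Y1 ω + (1 - W ω) * Y0 ω)
    (hW : HasCondExp m μ W e) (hWY1 : HasCondExp m μ (W * Y1) (e * μ1))
    (hWY0 : HasCondExp m μ ((1 - W) * Y0) ((1 - e) * μ0))
    (hτ : Measurable[m] τ) (hε : Measurable[m] ε) (hβ0 : Measurable[m] β0)
    (hβ1 : Measurable[m] β1) (hτ' : MemLp τ ∞ μ) (hε' : MemLp ε ∞ μ) (hβ0' : MemLp β0 ∞ μ)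
    (hβ1' : MemLp β1 ∞ μ) :
    μ[gnpwResidual θ1 θ2 θ3 θ4 W Y τ ε β0 β1|m] =ᵐ[μ] fun ω =>
      (θ1 * e ω + θ2 * ε ω + θ3 * e ω * ε ω + θ4 * ε ω ^ 2) * τ ω
        - (1 - ε ω) * (e ω * μ1 ω) + ε ω * ((1 - e ω) * μ0 ω)
        + (e ω - ε ω) * (β0 ω + (θ2 + θ4 * ε ω) * (β1 ω - β0 ω)) := by
  set g : Ω → ℝ := fun ω => β0 ω + (θ2 + θ4 * ε ω) * (β1 ω - β0 ω) with hg_def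
  have hg' : MemLp g ∞ μ :=
    hβ0'.add ((hβ1'.sub hβ0').mul' ((memLp_const θ2).add (hε'.const_mul θ4)))
  set a : Ω → ℝ := fun ω => (θ1 + θ3 * ε ω) * τ ω + g ω
  set b : Ω → ℝ := fun ω => (θ2 * ε ω + θ4 * (ε ω * ε ω)) * τ ω - ε ω * g ω
  have ha' : MemLp a ∞ μ := (hτ'.mul' ((memLp_const θ1).add (hε'.const_mul θ3))).add hg'
  have hb' : MemLp b ∞ μ :=
    (hτ'.mul' ((hε'.const_mul θ2).add ((hε'.mul' hε').const_mul θ4))).sub (hg'.mul' hε')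
  have key := (((hW.mul_left (by fun_prop) ha').add
    (hWY1.mul_left (by fun_prop) (hε'.sub (memLp_const 1)))).add (hWY0.mul_left hε hε')).add
    (HasCondExp.of_measurable hm (by fun_prop) (hb'.integrable le_top))
  have hΨ : gnpwResidual θ1 θ2 θ3 θ4 W Y τ ε β0 β1
      = a * W + (ε - 1) * (W * Y1) + ε * ((1 - W) * Y0) + b := by
    ext ω
    simp only [gnpwResidual, a, b, hg_def, Pi.add_apply, Pi.mul_apply, Pi.sub_apply,
      Pi.one_apply]
    rcases hWbin ω with h | h <;> rw [hY ω, h] <;> ring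
  rw [hΨ]
  refine key.2.trans (Eventually.of_forall fun ω => ?_)
  simp only [a, b, hg_def, Pi.add_apply, Pi.mul_apply, Pi.sub_apply, Pi.one_apply]
  ring

theorem condExp_gnpwResidual_of_true_propensity [IsFiniteMeasure μ] (hm : m ≤ mΩ) {θ1 θ2 θ3 θ4 : ℝ}
    (hθ12 : θ1 + θ2 = 1) (hθ34 : θ3 + θ4 = -1) {W Y Y0 Y1 e μ0 μ1 τ β0 β1 : Ω → ℝ}
    (hWbin : ∀ ω, W ω = 0 ∨ W ω = 1) (hY : ∀ ω, Y ω = W ω * Y1 ω + (1 - W ω) * Y0 ω)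
    (hW : HasCondExp m μ W e) (hWY1 : HasCondExp m μ (W * Y1) (e * μ1))
    (hWY0 : HasCondExp m μ ((1 - W) * Y0) ((1 - e) * μ0))
    (hτ : Measurable[m] τ) (he : Measurable[m] e) (hβ0 : Measurable[m] β0)
    (hβ1 : Measurable[m] β1) (hτ' : MemLp τ ∞ μ) (he' : MemLp e ∞ μ) (hβ0' : MemLp β0 ∞ μ)
    (hβ1' : MemLp β1 ∞ μ) :
    μ[gnpwResidual θ1 θ2 θ3 θ4 W Y τ e β0 β1|m] =ᵐ[μ]
      fun ω => e ω * (1 - e ω) * (τ ω - (μ1 ω - μ0 ω)) :=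
  (condExp_gnpwResidual hm θ1 θ2 θ3 θ4 hWbin hY hW hWY1 hWY0 hτ he hβ0 hβ1 hτ' he' hβ0' hβ1').trans
    (.of_forall fun ω => by
      linear_combination (e ω * τ ω) * hθ12 + (e ω ^ 2 * τ ω) * hθ34)

theorem condExp_gnpwResidual_of_true_outcomeMeans [IsFiniteMeasure μ] (hm : m ≤ mΩ)
    {θ1 θ2 θ3 θ4 : ℝ} (hθ12 : θ1 + θ2 = 1) (hθ34 : θ3 + θ4 = -1) {W Y Y0 Y1 e μ0 μ1 τ ε : Ω → ℝ}
    (hWbin : ∀ ω, W ω = 0 ∨ W ω = 1) (hY : ∀ ω, Y ω = W ω * Y1 ω + (1 - W ω) * Y0 ω)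
    (hW : HasCondExp m μ W e) (hWY1 : HasCondExp m μ (W * Y1) (e * μ1))
    (hWY0 : HasCondExp m μ ((1 - W) * Y0) ((1 - e) * μ0))
    (hτ : Measurable[m] τ) (hε : Measurable[m] ε) (hμ0 : Measurable[m] μ0)
    (hμ1 : Measurable[m] μ1) (hτ' : MemLp τ ∞ μ) (hε' : MemLp ε ∞ μ) (hμ0' : MemLp μ0 ∞ μ)
    (hμ1' : MemLp μ1 ∞ μ) :
    μ[gnpwResidual θ1 θ2 θ3 θ4 W Y τ ε μ0 μ1|m] =ᵐ[μ] fun ω =>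
      (θ1 * e ω + θ2 * ε ω + θ3 * e ω * ε ω + θ4 * ε ω ^ 2) * (τ ω - (μ1 ω - μ0 ω)) :=
  (condExp_gnpwResidual hm θ1 θ2 θ3 θ4 hWbin hY hW hWY1 hWY0 hτ hε hμ0 hμ1 hτ' hε' hμ0' hμ1').trans
    (.of_forall fun ω => by
      linear_combination (e ω * (μ1 ω - μ0 ω)) * hθ12 + (e ω * ε ω * (μ1 ω - μ0 ω)) * hθ34)

end General

theorem stmt_8
    {Ω 𝒳 : Type*} [MeasurableSpace Ω] [StandardBorelSpace Ω] [MeasurableSpace 𝒳]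
    (P : Measure Ω) [IsProbabilityMeasure P]
    (X : Ω → 𝒳) (hX : Measurable X)
    (W : Ω → ℝ) (hWm : Measurable W) (hWbin : ∀ ω, W ω = 0 ∨ W ω = 1)
    (Y0 Y1 : Ω → ℝ) (hY0m : Measurable Y0) (hY1m : Measurable Y1)
    (CY : ℝ) (hYbdd : ∀ ω, |Y0 ω| ≤ CY ∧ |Y1 ω| ≤ CY)
    (Y : Ω → ℝ) (hSUTVA : ∀ ω, Y ω = W ω * Y1 ω + (1 - W ω) * Y0 ω)
    (hUnconf : CondIndepFun (sigmaAlg X) hX.comap_le W (fun ω => (Y0 ω, Y1 ω)) P)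
    (e : 𝒳 → ℝ) (hem : Measurable e)
    (hprop : P[W|sigmaAlg X] =ᵐ[P] (fun ω => e (X ω)))
    (hoverlap : ∀ᵐ ω ∂P, 0 < e (X ω) ∧ e (X ω) < 1)
    (μ0 μ1 : 𝒳 → ℝ) (hμ0m : Measurable μ0) (hμ1m : Measurable μ1)
    (Cμ : ℝ) (hμbdd : ∀ x, |μ0 x| ≤ Cμ ∧ |μ1 x| ≤ Cμ)
    (hμ0c : P[Y0|sigmaAlg X] =ᵐ[P] (fun ω => μ0 (X ω)))
    (hμ1c : P[Y1|sigmaAlg X] =ᵐ[P] (fun ω => μ1 (X ω)))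
    (θ1 θ2 θ3 θ4 : ℝ) (hθ12 : θ1 + θ2 = 1) (hθ34 : θ3 + θ4 = -1)
    (τt m0t m1t : 𝒳 → ℝ) (hτtm : Measurable τt) (hm0tm : Measurable m0t) (hm1tm : Measurable m1t)
    (Cτt : ℝ) (hτtb : ∀ x, |τt x| ≤ Cτt)
    (Cmt : ℝ) (hmtb : ∀ x, |m0t x| ≤ Cmt ∧ |m1t x| ≤ Cmt)
    (et : 𝒳 → ℝ) (hetm : Measurable et)
    (hetov : ∀ᵐ ω ∂P, 0 < et (X ω) ∧ et (X ω) < 1) :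
    (P[(fun ω => (θ1 * W ω + θ2 * e (X ω) + θ3 * W ω * e (X ω) + θ4 * e (X ω) ^ 2) * τt (X ω) - (W ω - e (X ω)) * (Y ω - m0t (X ω) - (θ2 + θ4 * e (X ω)) * (m1t (X ω) - m0t (X ω))))|sigmaAlg X]
      =ᵐ[P] (fun ω => e (X ω) * (1 - e (X ω)) * (τt (X ω) - (μ1 (X ω) - μ0 (X ω))))) ∧
    (P[(fun ω => (θ1 * W ω + θ2 * et (X ω) + θ3 * W ω * et (X ω) + θ4 * et (X ω) ^ 2) * τt (X ω) - (W ω - et (X ω)) * (Y ω - μ0 (X ω) - (θ2 + θ4 * et (X ω)) * (μ1 (X ω) - μ0 (X ω))))|sigmaAlg X]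
      =ᵐ[P] (fun ω => (θ1 * e (X ω) + θ2 * et (X ω) + θ3 * e (X ω) * et (X ω) + θ4 * et (X ω) ^ 2) *
        (τt (X ω) - (μ1 (X ω) - μ0 (X ω))))) ∧
    ((P[(fun ω => (θ1 * W ω + θ2 * e (X ω) + θ3 * W ω * e (X ω) + θ4 * e (X ω) ^ 2) * τt (X ω) - (W ω - e (X ω)) * (Y ω - m0t (X ω) - (θ2 + θ4 * e (X ω)) * (m1t (X ω) - m0t (X ω))))|sigmaAlg X] =ᵐ[P] 0 ∧
      P[(fun ω => (θ1 * W ω + θ2 * et (X ω) + θ3 * W ω * et (X ω) + θ4 * et (X ω) ^ 2) * τt (X ω) - (W ω - et (X ω)) * (Y ω - μ0 (X ω) - (θ2 + θ4 * et (X ω)) * (μ1 (X ω) - μ0 (X ω))))|sigmaAlg X] =ᵐ[P] 0) ↔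
      (∀ᵐ ω ∂P, τt (X ω) = μ1 (X ω) - μ0 (X ω))) := by
  have hm : sigmaAlg X ≤ _ := hX.comap_le
  have hmeasX {f : 𝒳 → ℝ} (hf : Measurable f) : Measurable[sigmaAlg X] fun ω => f (X ω) :=
    hf.comp (comap_measurable X)
  have hbddX {f : 𝒳 → ℝ} (hf : Measurable f) {C : ℝ} (hC : ∀ᵐ ω ∂P, |f (X ω)| ≤ C) :
      MemLp (fun ω => f (X ω)) ∞ P :=
    memLp_top_of_bound (hf.comp hX).aestronglyMeasurable C hC
  have hY0' : MemLp Y0 ∞ P :=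
    memLp_top_of_bound hY0m.aestronglyMeasurable CY (.of_forall fun ω => (hYbdd ω).1)
  have hY1' : MemLp Y1 ∞ P :=
    memLp_top_of_bound hY1m.aestronglyMeasurable CY (.of_forall fun ω => (hYbdd ω).2)
  have hτt' := hbddX hτtm (.of_forall fun ω => hτtb _)
  have he' := hbddX hem (hoverlap.mono fun ω h => abs_le.2 ⟨by linarith [h.1], h.2.le⟩)
  have het' := hbddX hetm (hetov.mono fun ω h => abs_le.2 ⟨by linarith [h.1], h.2.le⟩)
  obtain ⟨hW, hWY1, hWY0⟩ := hasCondExp_treatment_outcomes hm hWm hWbin hY0m hY1m hY0' hY1'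
    hUnconf hprop hμ0c hμ1c
  have hΨ_prop := condExp_gnpwResidual_of_true_propensity hm hθ12 hθ34 hWbin hSUTVA hW hWY1 hWY0
    (hmeasX hτtm) (hmeasX hem) (hmeasX hm0tm) (hmeasX hm1tm) hτt' he'
    (hbddX hm0tm (.of_forall fun ω => (hmtb _).1)) (hbddX hm1tm (.of_forall fun ω => (hmtb _).2))
  have hΨ_means := condExp_gnpwResidual_of_true_outcomeMeans hm hθ12 hθ34 hWbin hSUTVA hW hWY1 hWY0
    (hmeasX hτtm) (hmeasX hetm) (hmeasX hμ0m) (hmeasX hμ1m) hτt' het'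
    (hbddX hμ0m (.of_forall fun ω => (hμbdd _).1)) (hbddX hμ1m (.of_forall fun ω => (hμbdd _).2))
  refine ⟨hΨ_prop, hΨ_means, fun h => ?_, fun h => ⟨hΨ_prop.trans ?_, hΨ_means.trans ?_⟩⟩
  · filter_upwards [hΨ_prop.symm.trans h.1, hoverlap] with ω h0 hω
    have he0 : e (X ω) * (1 - e (X ω)) ≠ 0 := mul_ne_zero hω.1.ne' (sub_pos.2 hω.2).ne'
    exact sub_eq_zero.1 ((mul_eq_zero.1 h0).resolve_left he0)
  all_goals filter_upwards [h] with ω hω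
  all_goals simp [hω]
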